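/- arXiv:2204.05618 — 5 statements merged into one kernel-verified Lean document; each statement's English description precedes it below -/
import Mathlib

section
/- Let λ₁, λ₂ > 0 and H > 0. Suppose f : ℕ → ℝ satisfies f(i) ≤ H for all i and the recursion f(i) ≤ sqrt(λ₁ · f(i+1)) + λ₁ + 2^{i+1} · λ₂ for all i. Then f(0) ≤ 6(λ₁ + λ₂). -/
/-!
AM-GM gives `√(λ₁ x) ≤ λ₁ + x / 4`, which linearizes the recursion to
`f i ≤ 2λ₁ + 2^(i+1) λ₂ + f (i+1) / 4`. The excess of `f i` over `8/3 λ₁ + 2^(i+2) λ₂` then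
shrinks by a factor `4` from one index to the previous one while staying bounded above, so it
is nonpositive.
-/

open Filter Topology

theorem Real.sqrt_mul_le_add_div_four {a x : ℝ} (ha : 0 ≤ a) (hx : 0 ≤ x) :
    √(a * x) ≤ a + x / 4 :=
  Real.sqrt_le_iff.mpr ⟨by positivity, by nlinarith [sq_nonneg (a - x / 4)]⟩

section Contraction

variable {g : ℕ → ℝ} {c : ℝ}

theorem le_pow_mul_add_of_le_mul_succ (hc : 0 ≤ c) (hg : ∀ i, g i ≤ c * g (i + 1)) (i n : ℕ) :
    g i ≤ c ^ n * g (i + n) := by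
  induction n with
  | zero => simp
  | succ n ih =>
    calc g i ≤ c ^ n * g (i + n) := ih
      _ ≤ c ^ n * (c * g (i + n + 1)) := by gcongr; exact hg _
      _ = c ^ (n + 1) * g (i + (n + 1)) := by ring_nf

theorem nonpos_of_le_mul_succ_of_le {B : ℝ} (hc₀ : 0 ≤ c) (hc₁ : c < 1)
    (hg : ∀ i, g i ≤ c * g (i + 1)) (hB : ∀ i, g i ≤ B) (i : ℕ) : g i ≤ 0 := by
  have hlim : Tendsto (fun n ↦ c ^ n * B) atTop (𝓝 0) := by
    simpa using (tendsto_pow_atTop_nhds_zero_of_lt_one hc₀ hc₁).mul_const B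
  refine ge_of_tendsto' hlim fun n ↦ ?_
  calc g i ≤ c ^ n * g (i + n) := le_pow_mul_add_of_le_mul_succ hc₀ hg i n
    _ ≤ c ^ n * B := by gcongr; exact hB _

end Contraction

theorem stmt_2_general (l1 l2 H : ℝ) (hl1 : 0 < l1) (hl2 : 0 < l2)
    (f : ℕ → ℝ) (hf0 : ∀ i, 0 ≤ f i) (hfH : ∀ i, f i ≤ H)
    (hrec : ∀ i, f i ≤ Real.sqrt (l1 * f (i + 1)) + l1 + 2 ^ (i + 1) * l2) :
    f 0 ≤ 6 * (l1 + l2) := by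
  have hlin (i : ℕ) : f i ≤ 2 * l1 + 2 ^ (i + 1) * l2 + f (i + 1) / 4 := by
    linarith [hrec i, Real.sqrt_mul_le_add_div_four hl1.le (hf0 (i + 1))]
  set g : ℕ → ℝ := fun i ↦ f i - (8 / 3 * l1 + 2 ^ (i + 2) * l2) with hg
  have hcontract (i : ℕ) : g i ≤ 1 / 4 * g (i + 1) := by
    simp only [hg, pow_succ] at hlin ⊢
    linarith [hlin i]
  have hbound (i : ℕ) : g i ≤ H := by
    simp only [hg]
    linarith [hfH i, show (0 : ℝ) ≤ 2 ^ (i + 2) * l2 by positivity]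
  have hg0 : g 0 ≤ 0 :=
    nonpos_of_le_mul_succ_of_le (by norm_num) (by norm_num) hcontract hbound 0
  simp only [hg] at hg0
  linarith

/-- Variance-recursion bound (Lemma 4 of Ren et al. 2021): if `f : ℕ → ℝ` is nonnegative,
uniformly bounded by `H`, and satisfies `f i ≤ sqrt (λ₁ f (i+1)) + λ₁ + 2^(i+1) λ₂`, then
`f 0 ≤ 6 (λ₁ + λ₂)`. -/
theorem stmt_2 (l1 l2 H : ℝ) (hl1 : 0 < l1) (hl2 : 0 < l2) (hH : 0 < H)
    (f : ℕ → ℝ) (hf0 : ∀ i, 0 ≤ f i) (hfH : ∀ i, f i ≤ H)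
    (hrec : ∀ i, f i ≤ Real.sqrt (l1 * f (i + 1)) + l1 + 2 ^ (i + 1) * l2) :
    f 0 ≤ 6 * (l1 + l2) :=
  stmt_2_general l1 l2 H hl1 hl2 f hf0 hfH hrec
end

section
/- For Bernoulli distributions with parameters p + ε and p where 1/2 ≤ p < 1 and 0 < ε ≤ 1 - p, the KL divergence satisfies KL(Bern(p+ε) ‖ Bern(p)) ≥ ε²/(2p(1-p)). -/
/-!
With `c = p (1 - p)`, the function `q ↦ KL(q ‖ p) - (q - p)² / (2c)` vanishes at `q = p`, so it
suffices that it is nondecreasing on `[p, 1]`. Its derivative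
`log (q / p) - log ((1 - q) / (1 - p)) - (q - p) / c` also vanishes at `p` and has derivative
`1 / (q (1 - q)) - 1 / c ≥ 0`, because `q (1 - q)` decreases for `q ≥ 1/2`.
-/

/-- KL divergence between Bernoulli distributions,
`KL(Bern q ‖ Bern p) = q log (q/p) + (1-q) log ((1-q)/(1-p))`. -/
noncomputable def klBern (q p : ℝ) : ℝ :=
  q * Real.log (q / p) + (1 - q) * Real.log ((1 - q) / (1 - p))

open Real Set

@[simp] lemma klBern_self (p : ℝ) : klBern p p = 0 := by simp [klBern]

lemma mul_one_sub_le_of_half_le {p x : ℝ} (hp : 1 / 2 ≤ p) (hx : p ≤ x) :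
    x * (1 - x) ≤ p * (1 - p) := by
  nlinarith

lemma continuous_klBern_left {p : ℝ} (hp0 : p ≠ 0) (hp1 : p ≠ 1) :
    Continuous fun q => klBern q p := by
  have h1p : 1 - p ≠ 0 := sub_ne_zero.mpr hp1.symm
  -- `x log x` is continuous at `0`, whereas `log` is not.
  have : (fun q => klBern q p) = fun q =>
      p * ((q / p) * log (q / p)) + (1 - p) * ((1 - q) / (1 - p) * log ((1 - q) / (1 - p))) := by
    funext q
    simp only [klBern]
    field_simp
  rw [this]
  exact (continuous_const.mul (continuous_mul_log.comp (continuous_id.div_const p))).add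
    (continuous_const.mul
      (continuous_mul_log.comp ((continuous_const.sub continuous_id).div_const _)))

lemma hasDerivAt_log_div_const {c x : ℝ} (hc : c ≠ 0) (hx : x ≠ 0) :
    HasDerivAt (fun x => log (x / c)) (1 / x) x := by
  refine (((hasDerivAt_id' x).div_const c).log (div_ne_zero hx hc)).congr_deriv ?_
  field_simp

lemma hasDerivAt_log_one_sub_div_const {c x : ℝ} (hc : c ≠ 1) (hx : x ≠ 1) :
    HasDerivAt (fun x => log ((1 - x) / (1 - c))) (-(1 / (1 - x))) x := by
  refine ((hasDerivAt_log_div_const (sub_ne_zero.mpr hc.symm) (sub_ne_zero.mpr hx.symm)).comp x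
    ((hasDerivAt_id' x).const_sub 1)).congr_deriv ?_
  ring

lemma hasDerivAt_klBern_left {p q : ℝ} (hp0 : p ≠ 0) (hp1 : p ≠ 1) (hq0 : q ≠ 0)
    (hq1 : q ≠ 1) :
    HasDerivAt (fun q => klBern q p) (log (q / p) - log ((1 - q) / (1 - p))) q := by
  refine (((hasDerivAt_id' q).mul (hasDerivAt_log_div_const hp0 hq0)).add
    (((hasDerivAt_id' q).const_sub 1).mul
      (hasDerivAt_log_one_sub_div_const hp1 hq1))).congr_deriv ?_
  field_simp
  ring

lemma monotoneOn_log_div_sub_log_div_sub_div {p : ℝ} (hp : 1 / 2 ≤ p) (hp1 : p < 1) :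
    MonotoneOn (fun x => log (x / p) - log ((1 - x) / (1 - p)) - (x - p) / (p * (1 - p)))
      (Ico p 1) := by
  have hp0 : 0 < p := by linarith
  have hderiv : ∀ x ∈ Ico p 1, HasDerivAt
      (fun x => log (x / p) - log ((1 - x) / (1 - p)) - (x - p) / (p * (1 - p)))
      (1 / (x * (1 - x)) - 1 / (p * (1 - p))) x := by
    rintro x ⟨hpx, hx1⟩
    have hx0 : 0 < x := hp0.trans_le hpx
    refine (((hasDerivAt_log_div_const hp0.ne' hx0.ne').sub
      (hasDerivAt_log_one_sub_div_const hp1.ne hx1.ne)).sub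
      (((hasDerivAt_id' x).sub_const p).div_const _)).congr_deriv ?_
    field_simp [(sub_pos.mpr hx1).ne']
    ring
  refine monotoneOn_of_hasDerivWithinAt_nonneg (convex_Ico p 1)
    (fun x hx => (hderiv x hx).continuousAt.continuousWithinAt)
    (fun x hx => (hderiv x (interior_subset hx)).hasDerivWithinAt) fun x hx => ?_
  rw [interior_Ico] at hx
  have hxx : 0 < x * (1 - x) := mul_pos (hp0.trans hx.1) (by linarith [hx.2])
  exact sub_nonneg.mpr (one_div_le_one_div_of_le hxx (mul_one_sub_le_of_half_le hp hx.1.le))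

lemma monotoneOn_klBern_sub_sq {p : ℝ} (hp : 1 / 2 ≤ p) (hp1 : p < 1) :
    MonotoneOn (fun q => klBern q p - (q - p) ^ 2 / (2 * p * (1 - p))) (Icc p 1) := by
  have hp0 : 0 < p := by linarith
  set g := fun x => log (x / p) - log ((1 - x) / (1 - p)) - (x - p) / (p * (1 - p))
  refine monotoneOn_of_hasDerivWithinAt_nonneg (f' := g) (convex_Icc p 1)
    (((continuous_klBern_left hp0.ne' hp1.ne).sub (by fun_prop)).continuousOn) (fun q hq => ?_)
    fun q hq => ?_ <;> rw [interior_Icc] at hq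
  · refine ((hasDerivAt_klBern_left hp0.ne' hp1.ne (hp0.trans hq.1).ne' hq.2.ne).sub
      (((hasDerivAt_id' q).sub_const p).pow 2 |>.div_const _)).hasDerivWithinAt.congr_deriv ?_
    simp only [g]
    field_simp
    ring
  · simpa [g] using
      monotoneOn_log_div_sub_log_div_sub_div hp hp1 ⟨le_rfl, hp1⟩ ⟨hq.1.le, hq.2⟩ hq.1.le

/-- For Bernoulli distributions with parameters `p + ε` and `p`, where `1/2 ≤ p < 1` and
`0 < ε ≤ 1 - p`, the KL divergence satisfies `KL(Bern(p+ε) ‖ Bern p) ≥ ε² / (2 p (1-p))`. -/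
theorem stmt_4 (p ε : ℝ) (hp : 1 / 2 ≤ p) (hp1 : p < 1) (hε : 0 < ε) (hε1 : ε ≤ 1 - p) :
    ε ^ 2 / (2 * p * (1 - p)) ≤ klBern (p + ε) p := by
  have := monotoneOn_klBern_sub_sq hp hp1 ⟨le_rfl, hp1.le⟩ ⟨by linarith, by linarith⟩
    (by linarith : p ≤ p + ε)
  simpa using this
end

section
/- In a finite discounted MDP, for any two policies π and π', J(π) - J(π') = H · E_{(s) ~ d^π} [ Σ_a π(a|s) A^{π'}(s,a) ], where H = 1/(1-γ), d^π is the normalized discounted state occupancy of π, and A^{π'}(s,a) = Q^{π'}(s,a) - V^{π'}(s) is the advantage function of π'. -/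
open Finset

/-- State distribution at time `t` under stochastic policy `π`, dynamics `P`, initial `ρ`. -/
noncomputable def stateDist {S A : Type*} [Fintype S] [Fintype A]
    (P : S → A → S → ℝ) (π : S → A → ℝ) (ρ : S → ℝ) : ℕ → S → ℝ
  | 0 => ρ
  | (t + 1) => fun s' => ∑ s, ∑ a, stateDist P π ρ t s * π s a * P s a s'

/-- Expected discounted return `J(π)` from initial distribution `ρ`. -/
noncomputable def Jret {S A : Type*} [Fintype S] [Fintype A]
    (P : S → A → S → ℝ) (π : S → A → ℝ) (ρ : S → ℝ) (r : S → A → ℝ) (γ : ℝ) : ℝ :=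
  ∑' t : ℕ, γ ^ t * ∑ s, ∑ a, stateDist P π ρ t s * π s a * r s a

/-- Value function `V^π(s)`. -/
noncomputable def Vval {S A : Type*} [Fintype S] [Fintype A] [DecidableEq S]
    (P : S → A → S → ℝ) (π : S → A → ℝ) (r : S → A → ℝ) (γ : ℝ) (s0 : S) : ℝ :=
  Jret P π (fun s => if s = s0 then 1 else 0) r γ

/-- Q-function `Q^π(s,a)`. -/
noncomputable def Qval {S A : Type*} [Fintype S] [Fintype A] [DecidableEq S]
    (P : S → A → S → ℝ) (π : S → A → ℝ) (r : S → A → ℝ) (γ : ℝ) (s : S) (a : A) : ℝ :=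
  r s a + γ * ∑ s', P s a s' * Vval P π r γ s'

/-- Normalized discounted state occupancy `d^π(s) = (1-γ) Σ_t γ^t P(s_t = s; π)`. -/
noncomputable def dOcc {S A : Type*} [Fintype S] [Fintype A]
    (P : S → A → S → ℝ) (π : S → A → ℝ) (ρ : S → ℝ) (γ : ℝ) (s : S) : ℝ :=
  (1 - γ) * ∑' t : ℕ, γ ^ t * stateDist P π ρ t s

/-! With `M_π` the state-transition matrix of `π`, the state distribution at time `t` is
`ρ M_π ^ t`, so everything is expressed through the occupancy matrix
`R_π = ∑ γ ^ t M_π ^ t = (1 - γ M_π)⁻¹`, a convergent geometric series because `M_π` is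
row-stochastic and `γ < 1`. Then `J(π) = ρ R_π r_π`, `V^{π'} = R_{π'} r_{π'}`, `d^π = (1 - γ) ρ R_π`,
and the `π`-average of `A^{π'}` is `g = r_π + γ M_π V^{π'} - V^{π'}`. Since `R_π (γ M_π - 1) = -1`,
`ρ R_π g = J(π) - ρ V^{π'} = J(π) - J(π')`. -/

open Matrix

section MatrixSeries

variable {ι m n α : Type*} [Fintype m] [NonUnitalNonAssocSemiring α]
  [TopologicalSpace α] [IsTopologicalSemiring α] {f : ι → Matrix m n α} {B : Matrix m n α}

theorem HasSum.dotProduct_mulVec [Fintype n] (h : HasSum f B) (v : m → α) (w : n → α) :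
    HasSum (fun t => v ⬝ᵥ (f t *ᵥ w)) (v ⬝ᵥ (B *ᵥ w)) :=
  hasSum_sum fun i _ => (hasSum_sum fun j _ =>
    ((Pi.hasSum.1 (Pi.hasSum.1 h i) j).mul_right (w j))).mul_left (v i)

theorem HasSum.vecMul_apply (h : HasSum f B) (v : m → α) (j : n) :
    HasSum (fun t => (v ᵥ* f t) j) ((v ᵥ* B) j) :=
  hasSum_sum fun i _ => (Pi.hasSum.1 (Pi.hasSum.1 h i) j).mul_left (v i)

end MatrixSeries

theorem summable_pow_smul_of_mem_rowStochastic {n : Type*} [Fintype n] [DecidableEq n]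
    {M : Matrix n n ℝ} (hM : M ∈ rowStochastic ℝ n) {γ : ℝ} (hγ0 : 0 ≤ γ) (hγ1 : γ < 1) :
    Summable fun t : ℕ => (γ • M) ^ t := by
  refine Pi.summable.2 fun i => Pi.summable.2 fun j => ?_
  refine (summable_geometric_of_lt_one hγ0 hγ1).of_nonneg_of_le (fun t => ?_) (fun t => ?_)
  · rw [smul_pow, Matrix.smul_apply, smul_eq_mul]
    exact mul_nonneg (pow_nonneg hγ0 t) (nonneg_of_mem_rowStochastic (pow_mem hM t))
  · rw [smul_pow, Matrix.smul_apply, smul_eq_mul]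
    exact mul_le_of_le_one_right (pow_nonneg hγ0 t) (le_one_of_mem_rowStochastic (pow_mem hM t))

section MDP

variable {S A : Type*} [Fintype S] [Fintype A] [DecidableEq S]

noncomputable def transMatrix (P : S → A → S → ℝ) (π : S → A → ℝ) : Matrix S S ℝ :=
  of fun s s' => ∑ a, π s a * P s a s'

noncomputable def policyReward (π r : S → A → ℝ) : S → ℝ :=
  fun s => ∑ a, π s a * r s a

noncomputable def occupancyMatrix (P : S → A → S → ℝ) (π : S → A → ℝ) (γ : ℝ) : Matrix S S ℝ :=
  ∑' t : ℕ, (γ • transMatrix P π) ^ t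

theorem stateDist_eq_vecMul_pow (P : S → A → S → ℝ) (π : S → A → ℝ) (ρ : S → ℝ) (t : ℕ) :
    stateDist P π ρ t = ρ ᵥ* transMatrix P π ^ t := by
  induction t with
  | zero => simp [stateDist]
  | succ t ih =>
    ext s'
    rw [pow_succ, ← vecMul_vecMul, ← ih]
    simp only [stateDist, vecMul, dotProduct, transMatrix, of_apply, mul_sum, mul_assoc]

variable {P : S → A → S → ℝ} {π : S → A → ℝ} {γ : ℝ}

theorem transMatrix_mem_rowStochastic (hP0 : ∀ s a s', 0 ≤ P s a s')
    (hP1 : ∀ s a, ∑ s', P s a s' = 1) (hπ0 : ∀ s a, 0 ≤ π s a) (hπ1 : ∀ s, ∑ a, π s a = 1) :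
    transMatrix P π ∈ rowStochastic ℝ S := by
  refine mem_rowStochastic_iff_sum.2
    ⟨fun s s' => sum_nonneg fun a _ => mul_nonneg (hπ0 s a) (hP0 s a s'), fun s => ?_⟩
  simp only [transMatrix, of_apply]
  rw [sum_comm]
  simp [← mul_sum, hP1, hπ1]


theorem hasSum_occupancyMatrix (hM : transMatrix P π ∈ rowStochastic ℝ S) (hγ0 : 0 ≤ γ)
    (hγ1 : γ < 1) : HasSum (fun t : ℕ => (γ • transMatrix P π) ^ t) (occupancyMatrix P π γ) :=
  (summable_pow_smul_of_mem_rowStochastic hM hγ0 hγ1).hasSum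

theorem occupancyMatrix_mul_one_sub (hM : transMatrix P π ∈ rowStochastic ℝ S) (hγ0 : 0 ≤ γ)
    (hγ1 : γ < 1) : occupancyMatrix P π γ * (1 - γ • transMatrix P π) = 1 :=
  (summable_pow_smul_of_mem_rowStochastic hM hγ0 hγ1).tsum_pow_mul_one_sub

theorem occupancyMatrix_mulVec_sub_self (hM : transMatrix P π ∈ rowStochastic ℝ S)
    (hγ0 : 0 ≤ γ) (hγ1 : γ < 1) (v : S → ℝ) :
    occupancyMatrix P π γ *ᵥ ((γ • transMatrix P π) *ᵥ v - v) = -v := by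
  have h : (γ • transMatrix P π) *ᵥ v - v = -((1 - γ • transMatrix P π) *ᵥ v) := by
    rw [sub_mulVec, one_mulVec, neg_sub]
  rw [h, mulVec_neg, mulVec_mulVec, occupancyMatrix_mul_one_sub hM hγ0 hγ1, one_mulVec]

theorem Jret_eq_dotProduct (hM : transMatrix P π ∈ rowStochastic ℝ S) (hγ0 : 0 ≤ γ)
    (hγ1 : γ < 1) (ρ : S → ℝ) (r : S → A → ℝ) :
    Jret P π ρ r γ = ρ ⬝ᵥ (occupancyMatrix P π γ *ᵥ policyReward π r) := by
  refine Eq.trans (tsum_congr fun t => ?_) ((hasSum_occupancyMatrix hM hγ0 hγ1).dotProduct_mulVec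
    ρ (policyReward π r)).tsum_eq
  rw [smul_pow, smul_mulVec, dotProduct_smul, smul_eq_mul, dotProduct_mulVec,
    ← stateDist_eq_vecMul_pow]
  simp only [dotProduct, policyReward, mul_sum, mul_assoc]

theorem Vval_eq_mulVec (hM : transMatrix P π ∈ rowStochastic ℝ S) (hγ0 : 0 ≤ γ)
    (hγ1 : γ < 1) (r : S → A → ℝ) :
    Vval P π r γ = occupancyMatrix P π γ *ᵥ policyReward π r := by
  ext s
  have hδ : (fun x => if x = s then (1 : ℝ) else 0) = Pi.single s 1 := by
    ext x; simp [Pi.single_apply]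
  rw [Vval, Jret_eq_dotProduct hM hγ0 hγ1, hδ, single_one_dotProduct]

theorem dOcc_eq_vecMul (hM : transMatrix P π ∈ rowStochastic ℝ S) (hγ0 : 0 ≤ γ)
    (hγ1 : γ < 1) (ρ : S → ℝ) (s : S) :
    dOcc P π ρ γ s = (1 - γ) * (ρ ᵥ* occupancyMatrix P π γ) s := by
  refine congrArg _ (Eq.trans (tsum_congr fun t => ?_)
    ((hasSum_occupancyMatrix hM hγ0 hγ1).vecMul_apply ρ s).tsum_eq)
  rw [smul_pow, vecMul_smul, stateDist_eq_vecMul_pow, Pi.smul_apply, smul_eq_mul]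

theorem sum_mul_advantage (π' r : S → A → ℝ) (hπ1 : ∀ s, ∑ a, π s a = 1) (s : S) :
    ∑ a, π s a * (Qval P π' r γ s a - Vval P π' r γ s) =
      (policyReward π r + (γ • transMatrix P π) *ᵥ Vval P π' r γ - Vval P π' r γ) s := by
  simp only [mul_sub, sum_sub_distrib, ← sum_mul, hπ1, one_mul]
  simp only [Qval, mul_add, sum_add_distrib, Pi.sub_apply, Pi.add_apply, policyReward,
    smul_mulVec, Pi.smul_apply, smul_eq_mul, mulVec, dotProduct, transMatrix, of_apply, sum_mul,
    mul_sum]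
  congr 2
  rw [sum_comm]
  refine sum_congr rfl fun a _ => sum_congr rfl fun s' _ => by ring

end MDP

theorem stmt_9_general {S A : Type*} [Fintype S] [Fintype A] [DecidableEq S]
    (γ : ℝ) (hγ0 : 0 ≤ γ) (hγ1 : γ < 1)
    (P : S → A → S → ℝ) (hP0 : ∀ s a s', 0 ≤ P s a s') (hP1 : ∀ s a, ∑ s', P s a s' = 1)
    (r : S → A → ℝ)
    (ρ : S → ℝ)
    (π π' : S → A → ℝ)
    (hπ0 : ∀ s a, 0 ≤ π s a) (hπ1 : ∀ s, ∑ a, π s a = 1)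
    (hπ'0 : ∀ s a, 0 ≤ π' s a) (hπ'1 : ∀ s, ∑ a, π' s a = 1) :
    Jret P π ρ r γ - Jret P π' ρ r γ =
      (1 / (1 - γ)) * ∑ s, dOcc P π ρ γ s *
        ∑ a, π s a * (Qval P π' r γ s a - Vval P π' r γ s) := by
  have hM := transMatrix_mem_rowStochastic hP0 hP1 hπ0 hπ1
  have hM' := transMatrix_mem_rowStochastic hP0 hP1 hπ'0 hπ'1
  calc Jret P π ρ r γ - Jret P π' ρ r γ
      = ρ ⬝ᵥ (occupancyMatrix P π γ *ᵥ policyReward π r) - ρ ⬝ᵥ Vval P π' r γ := by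
        rw [Jret_eq_dotProduct hM hγ0 hγ1, Jret_eq_dotProduct hM' hγ0 hγ1,
          ← Vval_eq_mulVec hM' hγ0 hγ1]
    _ = (ρ ᵥ* occupancyMatrix P π γ) ⬝ᵥ
          (policyReward π r + (γ • transMatrix P π) *ᵥ Vval P π' r γ - Vval P π' r γ) := by
        rw [← dotProduct_mulVec, add_sub_assoc, mulVec_add,
          occupancyMatrix_mulVec_sub_self hM hγ0 hγ1, dotProduct_add, dotProduct_neg, sub_eq_add_neg]
    _ = _ := by
        simp only [sum_mul_advantage π' r hπ1, dOcc_eq_vecMul hM hγ0 hγ1, dotProduct, mul_assoc,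
          ← mul_sum]
        rw [one_div, inv_mul_cancel_left₀ (sub_pos.2 hγ1).ne']

/-- Performance difference lemma: for any two policies `π`, `π'` in a finite discounted MDP,
`J(π) - J(π') = H · E_{s ~ d^π} [Σ_a π(a|s) A^{π'}(s,a)]`, where `H = 1/(1-γ)` and
`A^{π'} = Q^{π'} - V^{π'}`. -/
theorem stmt_9 {S A : Type*} [Fintype S] [Fintype A] [DecidableEq S]
    (γ : ℝ) (hγ0 : 0 ≤ γ) (hγ1 : γ < 1)
    (P : S → A → S → ℝ) (hP0 : ∀ s a s', 0 ≤ P s a s') (hP1 : ∀ s a, ∑ s', P s a s' = 1)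
    (r : S → A → ℝ) (hr : ∀ s a, |r s a| ≤ 1)
    (ρ : S → ℝ) (hρ0 : ∀ s, 0 ≤ ρ s) (hρ1 : ∑ s, ρ s = 1)
    (π π' : S → A → ℝ)
    (hπ0 : ∀ s a, 0 ≤ π s a) (hπ1 : ∀ s, ∑ a, π s a = 1)
    (hπ'0 : ∀ s a, 0 ≤ π' s a) (hπ'1 : ∀ s, ∑ a, π' s a = 1) :
    Jret P π ρ r γ - Jret P π' ρ r γ =
      (1 / (1 - γ)) * ∑ s, dOcc P π ρ γ s *
        ∑ a, π s a * (Qval P π' r γ s a - Vval P π' r γ s) :=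
  stmt_9_general γ hγ0 hγ1 P hP0 hP1 r ρ π π' hπ0 hπ1 hπ'0 hπ'1
end

section
/- In the conservative value iteration algorithm, on the good event E, the estimation error propagates as Q*(s,a) - Q̂_i(s,a) ≤ γ · P(s,a)·(Q*(·;π*) - Q̂_{i-1}(·;π*)) + 2·b_i(s,a) for every (s,a), where f(s;π) := Σ_a π(a|s)f(s,a). -/
open Finset

/-!
Subtracting the two Bellman backups splits `Q* - Q̂_i` into the estimation error
`(r - r̂) + γ (P - P̂)·V̂_{i-1}`, the penalty `b_i`, and the propagated error
`γ P·(V* - V̂_{i-1})`. On the good event the first term is at most `b_i`, and since `P ≥ 0`,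
`V* = Q*(·;π*)` and `V̂_{i-1} ≥ Q̂_{i-1}(·;π*)`, the last one is at most
`γ P·(Q*(·;π*) - Q̂_{i-1}(·;π*))`.
-/

theorem backup_sub_backup_eq {ι : Type*} (t : Finset ι) (γ r rhat b : ℝ) (p phat V W : ι → ℝ) :
    (r + γ * ∑ x ∈ t, p x * V x) - (rhat - b + γ * ∑ x ∈ t, phat x * W x) =
      (r - rhat) + γ * ∑ x ∈ t, (p x - phat x) * W x + b + γ * ∑ x ∈ t, p x * (V x - W x) := by
  simp only [sub_mul, mul_sub, sum_sub_distrib]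
  ring

theorem stmt_13_general {S A : Type*} [Fintype S]
    (γ : ℝ) (hγ : 0 ≤ γ)
    (P Phat : S → A → S → ℝ) (hP0 : ∀ s a s', 0 ≤ P s a s')
    (r rhat b : S → A → ℝ)
    (πstar : S → A)
    (Qstar : S → A → ℝ) (Vstar : S → ℝ)
    (hVstar : ∀ s, Vstar s = Qstar s (πstar s))
    (hBellman : ∀ s a, Qstar s a = r s a + γ * ∑ s', P s a s' * Vstar s')
    (Qprev : S → A → ℝ) (Vprev : S → ℝ)
    (hVprev : ∀ s, Qprev s (πstar s) ≤ Vprev s)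
    -- good event: the penalty dominates the empirical estimation errors
    (hE : ∀ s a, (r s a - rhat s a) +
      γ * ∑ s', (P s a s' - Phat s a s') * Vprev s' ≤ b s a)
    (Qcur : S → A → ℝ)
    (hQcur : ∀ s a, Qcur s a = rhat s a - b s a + γ * ∑ s', Phat s a s' * Vprev s') :
    ∀ s a, Qstar s a - Qcur s a ≤
      γ * (∑ s', P s a s' * (Qstar s' (πstar s') - Qprev s' (πstar s'))) + 2 * b s a := by
  intro s a
  have propagated_le : γ * ∑ s', P s a s' * (Vstar s' - Vprev s') ≤
      γ * ∑ s', P s a s' * (Qstar s' (πstar s') - Qprev s' (πstar s')) := by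
    gcongr with s' _
    · exact hP0 s a s'
    · exact (hVstar s').le
    · exact hVprev s'
  rw [hBellman, hQcur, backup_sub_backup_eq]
  linarith [hE s a]

/-- Error propagation in conservative value iteration: on the good event (where
`(r - r̂) + γ (P - P̂)·V̂_{i-1} ≤ b_i`), with `Q̂_i = r̂ - b_i + γ P̂·V̂_{i-1}`,
`V̂_{i-1} ≥ Q̂_{i-1}(·; π*)`, and `Q*` satisfying the Bellman equation with `V* = Q*(·; π*)`
for a deterministic optimal policy `π*`, we have
`Q*(s,a) - Q̂_i(s,a) ≤ γ P(s,a)·(Q*(·;π*) - Q̂_{i-1}(·;π*)) + 2 b_i(s,a)` for all `(s,a)`. -/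
theorem stmt_13 {S A : Type*} [Fintype S] [Fintype A]
    (γ : ℝ) (hγ : 0 ≤ γ)
    (P Phat : S → A → S → ℝ) (hP0 : ∀ s a s', 0 ≤ P s a s')
    (r rhat b : S → A → ℝ)
    (πstar : S → A)
    (Qstar : S → A → ℝ) (Vstar : S → ℝ)
    (hVstar : ∀ s, Vstar s = Qstar s (πstar s))
    (hBellman : ∀ s a, Qstar s a = r s a + γ * ∑ s', P s a s' * Vstar s')
    (Qprev : S → A → ℝ) (Vprev : S → ℝ)
    (hVprev : ∀ s, Qprev s (πstar s) ≤ Vprev s)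
    -- good event: the penalty dominates the empirical estimation errors
    (hE : ∀ s a, (r s a - rhat s a) +
      γ * ∑ s', (P s a s' - Phat s a s') * Vprev s' ≤ b s a)
    (Qcur : S → A → ℝ)
    (hQcur : ∀ s a, Qcur s a = rhat s a - b s a + γ * ∑ s', Phat s a s' * Vprev s') :
    ∀ s a, Qstar s a - Qcur s a ≤
      γ * (∑ s', P s a s' * (Qstar s' (πstar s') - Qprev s' (πstar s'))) + 2 * b s a :=
  stmt_13_general γ hγ P Phat hP0 r rhat b πstar Qstar Vstar hVstar hBellman Qprev Vprev hVprev hE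
    Qcur hQcur
end

section
/- Missing-mass bound: Let a dataset of N i.i.d. samples from μ over S×A be given, with counts n(s,a). For a deterministic policy π* with normalized occupancy d* satisfying d*(s,a) ≤ C*·μ(s,a) for all (s,a), and H = 1/(1-γ): Σ_s ρ(s)·P(n(s,π*(s)) = 0) ≤ 4·C*·|S|·H/(9N). -/
/-!
Each summand is at most `C* H p (1 - p)^N` with `p = μ(s, π* s)`, and
`p (1 - p)^N ≤ p e^{-Np} ≤ 1/(e N) < 4/(9N)` since `y e^{-y} ≤ e^{-1}`.
-/

open Finset

theorem one_sub_pow_le_exp_neg_mul {p : ℝ} (hp1 : p ≤ 1) (n : ℕ) :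
    (1 - p) ^ n ≤ Real.exp (-(n * p)) := by
  calc (1 - p) ^ n ≤ Real.exp (-p) ^ n :=
        pow_le_pow_left₀ (by linarith) (Real.one_sub_le_exp_neg p) n
    _ = Real.exp (-(n * p)) := by rw [← Real.exp_nat_mul]; ring_nf

theorem natCast_mul_mul_one_sub_pow_le_exp_neg_one {p : ℝ} (hp0 : 0 ≤ p) (hp1 : p ≤ 1)
    (n : ℕ) : n * p * (1 - p) ^ n ≤ Real.exp (-1) :=
  calc n * p * (1 - p) ^ n ≤ n * p * Real.exp (-(n * p)) := by
        gcongr; exact one_sub_pow_le_exp_neg_mul hp1 n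
    _ ≤ Real.exp (-1) := Real.mul_exp_neg_le_exp_neg_one _

theorem mul_one_sub_pow_le {p : ℝ} (hp0 : 0 ≤ p) (hp1 : p ≤ 1) {n : ℕ} (hn : 0 < n) :
    p * (1 - p) ^ n ≤ 4 / (9 * n) := by
  rw [le_div_iff₀ (by positivity)]
  linarith [natCast_mul_mul_one_sub_pow_le_exp_neg_one hp0 hp1 n, Real.exp_neg_one_lt_d9]

theorem stmt_16_general {S A : Type*} [Fintype S]
    (γ Cstar : ℝ) (N : ℕ) (hN : 0 < N) (hγ1 : γ < 1) (hC0 : 0 ≤ Cstar)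
    (H : ℝ) (hH : H = 1 / (1 - γ))
    (μ : S → A → ℝ) (hμ0 : ∀ s a, 0 ≤ μ s a) (hμ1 : ∀ s a, μ s a ≤ 1)
    (d : S → A → ℝ)
    (hC : ∀ s a, d s a ≤ Cstar * μ s a)
    (π : S → A)
    (ρ : S → ℝ) (hρ : ∀ s, ρ s ≤ H * d s (π s))
    (Pzero : S → ℝ) (hPzero : ∀ s, Pzero s = (1 - μ s (π s)) ^ N) :
    ∑ s, ρ s * Pzero s ≤ 4 * Cstar * (Fintype.card S) * H / (9 * N) := by
  have hH0 : 0 ≤ H := by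
    rw [hH]
    have : 0 < 1 - γ := by linarith
    positivity
  have hterm : ∀ s, ρ s * Pzero s ≤ Cstar * H * (4 / (9 * N)) := fun s => by
    have hp1 := hμ1 s (π s)
    have hP0 : 0 ≤ Pzero s := hPzero s ▸ pow_nonneg (by linarith) N
    calc ρ s * Pzero s ≤ H * (Cstar * μ s (π s)) * Pzero s := by
          gcongr
          exact (hρ s).trans (by gcongr; exact hC s (π s))
      _ = Cstar * H * (μ s (π s) * (1 - μ s (π s)) ^ N) := by rw [hPzero s]; ring
      _ ≤ Cstar * H * (4 / (9 * N)) := by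
          gcongr
          exact mul_one_sub_pow_le (hμ0 s (π s)) hp1 hN
  calc ∑ s, ρ s * Pzero s ≤ ∑ _s : S, Cstar * H * (4 / (9 * N)) :=
        sum_le_sum fun s _ => hterm s
    _ = 4 * Cstar * (Fintype.card S) * H / (9 * N) := by
        rw [sum_const, card_univ, nsmul_eq_mul]; ring

/-- Missing-mass bound: for a dataset of `N` i.i.d. samples from `μ` over `S × A` (so that the
probability that `(s,a)` is never sampled is `(1 - μ(s,a))^N`), a deterministic policy `π*`
with normalized occupancy `d*` satisfying `d*(s,a) ≤ C* μ(s,a)` and initial distribution `ρ`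
satisfying `ρ s ≤ H d*(s, π* s)` with `H = 1/(1-γ)`,
`Σ_s ρ(s) P(n(s, π* s) = 0) ≤ 4 C* |S| H / (9 N)`. -/
theorem stmt_16 {S A : Type*} [Fintype S] [Fintype A]
    (γ Cstar : ℝ) (N : ℕ) (hN : 0 < N) (hγ0 : 0 ≤ γ) (hγ1 : γ < 1) (hC0 : 0 ≤ Cstar)
    (H : ℝ) (hH : H = 1 / (1 - γ))
    (μ : S → A → ℝ) (hμ0 : ∀ s a, 0 ≤ μ s a) (hμ1 : ∀ s a, μ s a ≤ 1)
    (d : S → A → ℝ) (hd0 : ∀ s a, 0 ≤ d s a)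
    (hC : ∀ s a, d s a ≤ Cstar * μ s a)
    (π : S → A)
    (ρ : S → ℝ) (hρ0 : ∀ s, 0 ≤ ρ s) (hρ : ∀ s, ρ s ≤ H * d s (π s))
    (Pzero : S → ℝ) (hPzero : ∀ s, Pzero s = (1 - μ s (π s)) ^ N) :
    ∑ s, ρ s * Pzero s ≤ 4 * Cstar * (Fintype.card S) * H / (9 * N) :=
  stmt_16_general γ Cstar N hN hγ1 hC0 H hH μ hμ0 hμ1 d hC π ρ hρ Pzero hPzero
end
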